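/- Suppose K(·,x) ∈ C₀(X) for every x ∈ X and span{K(·,x) : x ∈ X} is dense in C₀(X). Let x₁,…,x_m ∈ X be pairwise distinct, suppose K[x] is invertible and ‖K[x]^{-1} K_x(x)‖₁ ≤ 1 for all x ∈ X. Let y ∈ ℝ^m and λ > 0. If c* ∈ ℝ^m minimizes the function c ↦ (1/m) Σ_{j=1}^m |Σ_{k=1}^m c_k K(x_k,x_j) − y_j|² + λ‖c‖₁ over ℝ^m, then the measure μ* := Σ_{j=1}^m c*_j δ_{x_j} minimizes μ ↦ (1/m) Σ_{j=1}^m |f_μ(x_j) − y_j|² + λ‖μ‖ over all μ ∈ M(X). -/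

import Mathlib

/-!
A finitely supported measure `μ* = ∑ cₖ δ_{xₖ}` has `f_{μ*}(xⱼ) = (K[x] c)ⱼ` and `‖μ*‖ ≤ ‖c‖₁`,
so its objective is at most the discrete objective at `c`. Conversely, for any `μ` the vector
`c := K[x]⁻¹ (f_μ(xⱼ))ⱼ` has the same data fit as `μ`, and `cⱼ = ∫ (K[x]⁻¹ K_x(t))ⱼ dμ(t)`, so the
hypothesis `‖K[x]⁻¹ K_x(t)‖₁ ≤ 1` gives `‖c‖₁ ≤ ‖μ‖`. Minimality of `c*` connects the two.
-/

open MeasureTheory Matrix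

/-- The integral of a function against a finite signed Borel measure,
defined via the Jordan decomposition. -/
noncomputable def sintegral {X : Type*} [MeasurableSpace X]
    (μ : SignedMeasure X) (f : X → ℝ) : ℝ :=
  (∫ t, f t ∂μ.toJordanDecomposition.posPart) - ∫ t, f t ∂μ.toJordanDecomposition.negPart

/-- The total variation norm of a finite signed Borel measure. -/
noncomputable def tvNorm {X : Type*} [MeasurableSpace X] (μ : SignedMeasure X) : ℝ :=
  (μ.totalVariation Set.univ).toReal

/-- The Dirac measure at a point, as a signed measure. -/
noncomputable def diracSM {X : Type*} [MeasurableSpace X] (x : X) : SignedMeasure X :=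
  (Measure.dirac x).toSignedMeasure

open VectorMeasure

namespace MeasureTheory.SignedMeasure

variable {X : Type*} [MeasurableSpace X]

theorem sintegral_eq_integral {μ : SignedMeasure X} {f : X → ℝ} (hf : μ.Integrable f) :
    sintegral μ f = ∫ᵛ x, f x ∂<•μ := by
  have hf' : Integrable f (μ.toJordanDecomposition.posPart + μ.toJordanDecomposition.negPart) := by
    rw [← totalVariation, totalVariation_eq_variation]; exact hf
  have hpos : Integrable f μ.toJordanDecomposition.posPart.toSignedMeasure.variation := by
    simpa using hf'.mono_measure (Measure.le_add_right le_rfl)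
  have hneg : Integrable f μ.toJordanDecomposition.negPart.toSignedMeasure.variation := by
    simpa using hf'.mono_measure (Measure.le_add_left le_rfl)
  conv_rhs => rw [← μ.toSignedMeasure_toJordanDecomposition, JordanDecomposition.toSignedMeasure]
  rw [integral_sub_vectorMeasure hpos hneg, integral_toSignedMeasure, integral_toSignedMeasure]
  rfl

theorem variation_diracSM (x : X) : (diracSM x).variation = Measure.dirac x :=
  Measure.variation_toSignedMeasure

theorem tvNorm_sum_smul_diracSM_le {ι : Type*} (s : Finset ι) (c : ι → ℝ) (x : ι → X) :
    tvNorm (∑ k ∈ s, c k • diracSM (x k)) ≤ ∑ k ∈ s, |c k| := by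
  have hle : (∑ k ∈ s, c k • diracSM (x k)).variation
      ≤ ∑ k ∈ s, ‖c k‖₊ • Measure.dirac (x k) := by
    simpa [variation_smul, variation_diracSM] using
      variation_finsetSum_le s fun k => c k • diracSM (x k)
  rw [tvNorm, totalVariation_eq_variation]
  calc ((∑ k ∈ s, c k • diracSM (x k)).variation Set.univ).toReal
      ≤ ((∑ k ∈ s, ‖c k‖₊ • Measure.dirac (x k)) Set.univ).toReal :=
        ENNReal.toReal_mono (by simp) (hle _)
    _ = ∑ k ∈ s, |c k| := by simp [ENNReal.toReal_sum]

theorem integral_sum_smul_diracSM {ι : Type*} (s : Finset ι) (c : ι → ℝ) (x : ι → X)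
    {f : X → ℝ} (hf : StronglyMeasurable f) :
    ∫ᵛ t, f t ∂<•(∑ k ∈ s, c k • diracSM (x k)) = ∑ k ∈ s, c k * f (x k) := by
  have hint : ∀ k, (c k • diracSM (x k)).Integrable f := fun k => by
    simp only [VectorMeasure.Integrable, variation_smul, variation_diracSM]
    exact (integrable_dirac' hf enorm_lt_top).smul_measure (by simp)
  rw [integral_finsetSum_vectorMeasure fun k _ => hint k]
  refine Finset.sum_congr rfl fun k _ => ?_
  rw [integral_smul_vectorMeasure, diracSM, integral_toSignedMeasure, integral_dirac' _ _ hf,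
    smul_eq_mul]

instance (μ : SignedMeasure X) : IsFiniteMeasure μ.variation :=
  μ.totalVariation_eq_variation ▸ inferInstance

theorem abs_integral_le_integral_abs (μ : SignedMeasure X) (f : X → ℝ) :
    |∫ᵛ t, f t ∂<•μ| ≤ ∫ t, |f t| ∂μ.variation := by
  have hB : ‖(ContinuousLinearMap.lsmul ℝ ℝ : ℝ →L[ℝ] ℝ →L[ℝ] ℝ).flip‖ ≤ 1 := by
    rw [ContinuousLinearMap.opNorm_flip]; exact ContinuousLinearMap.opNorm_lsmul_le
  simpa only [Real.norm_eq_abs] using VectorMeasure.norm_integral_le_integral_norm.trans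
    (mul_le_of_le_one_left (integral_nonneg fun t => norm_nonneg (f t)) hB)

theorem sum_abs_integral_le_tvNorm {ι : Type*} [Fintype ι] (μ : SignedMeasure X)
    {g : ι → X → ℝ} (hg : ∀ j, μ.Integrable (g j)) (hle : ∀ t, ∑ j, |g j t| ≤ 1) :
    ∑ j, |∫ᵛ t, g j t ∂<•μ| ≤ tvNorm μ :=
  calc ∑ j, |∫ᵛ t, g j t ∂<•μ| ≤ ∑ j, ∫ t, |g j t| ∂μ.variation :=
        Finset.sum_le_sum fun j _ => μ.abs_integral_le_integral_abs (g j)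
    _ = ∫ t, ∑ j, |g j t| ∂μ.variation :=
        (integral_finsetSum _ fun j _ => (hg j).abs).symm
    _ ≤ ∫ _, (1 : ℝ) ∂μ.variation :=
        integral_mono (integrable_finsetSum _ fun j _ => (hg j).abs) (integrable_const 1) hle
    _ = tvNorm μ := by simp [tvNorm, totalVariation_eq_variation, measureReal_def]

theorem mulVec_integral {ι κ : Type*} [Fintype κ] (A : Matrix ι κ ℝ) {μ : SignedMeasure X}
    {f : κ → X → ℝ} (hf : ∀ l, μ.Integrable (f l)) :
    A *ᵥ (fun l => ∫ᵛ t, f l t ∂<•μ) = fun j => ∫ᵛ t, (A *ᵥ fun l => f l t) j ∂<•μ := by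
  ext j
  simp only [mulVec, dotProduct]
  rw [VectorMeasure.integral_finsetSum _ fun l _ => (hf l).const_mul (A j l)]
  simp only [← smul_eq_mul, integral_fun_smul]

theorem sum_abs_mulVec_integral_le_tvNorm {ι κ : Type*} [Fintype ι] [Fintype κ]
    (A : Matrix ι κ ℝ) {μ : SignedMeasure X} {f : κ → X → ℝ} (hf : ∀ l, μ.Integrable (f l))
    (hA : ∀ t, ∑ j, |(A *ᵥ fun l => f l t) j| ≤ 1) :
    ∑ j, |(A *ᵥ fun l => ∫ᵛ t, f l t ∂<•μ) j| ≤ tvNorm μ := by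
  rw [mulVec_integral A hf]
  exact sum_abs_integral_le_tvNorm μ
    (fun j => integrable_finsetSum _ fun l _ => (hf l).const_mul (A j l)) hA

end MeasureTheory.SignedMeasure

open SignedMeasure

theorem stmt5_general {X : Type*} [TopologicalSpace X]
    [MeasurableSpace X] [BorelSpace X]
    (K : X → ZeroAtInftyContinuousMap X ℝ)
    (m : ℕ) (xs : Fin m → X)
    (Kmat : Matrix (Fin m) (Fin m) ℝ)
    (hKmat : ∀ j k, Kmat j k = (K (xs j)) (xs k))
    (hinv : IsUnit Kmat.det)
    (hH2 : ∀ x : X, ∑ j, |(Kmat⁻¹ *ᵥ fun j => (K (xs j)) x) j| ≤ 1)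
    (y : Fin m → ℝ) (lam : ℝ) (hlam : 0 < lam)
    (cstar : Fin m → ℝ)
    (hmin : ∀ c : Fin m → ℝ,
      (1 / (m : ℝ)) * ∑ j, |(∑ k, cstar k * (K (xs j)) (xs k)) - y j| ^ 2
          + lam * ∑ k, |cstar k|
        ≤ (1 / (m : ℝ)) * ∑ j, |(∑ k, c k * (K (xs j)) (xs k)) - y j| ^ 2
          + lam * ∑ k, |c k|) :
    ∀ μ : SignedMeasure X, μ.totalVariation.Regular →
      (1 / (m : ℝ)) * ∑ j, |sintegral (∑ k, cstar k • diracSM (xs k)) (K (xs j)) - y j| ^ 2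
          + lam * tvNorm (∑ k, cstar k • diracSM (xs k))
        ≤ (1 / (m : ℝ)) * ∑ j, |sintegral μ (K (xs j)) - y j| ^ 2 + lam * tvNorm μ := by
  intro μ _
  have hK (x : X) (ν : SignedMeasure X) : ν.Integrable (K x) := (K x).toBCF.integrable _
  have hstar (j : Fin m) :
      sintegral (∑ k, cstar k • diracSM (xs k)) (K (xs j)) = ∑ k, cstar k * K (xs j) (xs k) := by
    rw [sintegral_eq_integral (hK _ _)]
    exact integral_sum_smul_diracSM _ _ _ (K (xs j)).continuous.stronglyMeasurable
  set v : Fin m → ℝ := fun l => sintegral μ (K (xs l))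
  have hv : v = fun l => ∫ᵛ t, K (xs l) t ∂<•μ := funext fun l => sintegral_eq_integral (hK _ _)
  set c := Kmat⁻¹ *ᵥ v
  have hfit (j : Fin m) : ∑ k, c k * K (xs j) (xs k) = v j := by
    have : Kmat *ᵥ c = v := by rw [mulVec_mulVec, mul_nonsing_inv Kmat hinv, one_mulVec]
    rw [← this]
    simp only [mulVec, dotProduct, hKmat, mul_comm]
  have hnorm : ∑ k, |c k| ≤ tvNorm μ := by
    simp only [c, hv]
    exact sum_abs_mulVec_integral_le_tvNorm _ (fun l => hK _ _) hH2
  calc _ ≤ (1 / (m : ℝ)) * ∑ j, |(∑ k, cstar k * (K (xs j)) (xs k)) - y j| ^ 2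
          + lam * ∑ k, |cstar k| := by
        simp only [hstar]
        gcongr
        exact tvNorm_sum_smul_diracSM_le _ _ _
    _ ≤ (1 / (m : ℝ)) * ∑ j, |(∑ k, c k * (K (xs j)) (xs k)) - y j| ^ 2
          + lam * ∑ k, |c k| := hmin c
    _ ≤ _ := by
        simp only [hfit, v]
        gcongr

/-- under density of `span{K(·,x)}` in `C₀(X)`, invertibility of `K[x]`
(entries `(K[x])_{j,k} = K(x_k,x_j)`) and `‖K[x]⁻¹ K_x(x)‖₁ ≤ 1` for all `x`, if
`c*` minimizes `c ↦ (1/m)Σ_j |Σ_k c_k K(x_k,x_j) − y_j|² + λ‖c‖₁` over `ℝ^m`, then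
`μ* := Σ_j c*_j δ_{x_j}` minimizes `μ ↦ (1/m)Σ_j |f_μ(x_j) − y_j|² + λ‖μ‖` over `M(X)`.
Here `K x : C₀(X,ℝ)` is `t ↦ K(t,x)`, so `K(x_k,x_j) = (K (xs j)) (xs k)` and
`f_μ(x_j) = sintegral μ (K (xs j))`. -/
theorem stmt5 {X : Type*} [TopologicalSpace X] [LocallyCompactSpace X] [T2Space X]
    [MeasurableSpace X] [BorelSpace X]
    (K : X → ZeroAtInftyContinuousMap X ℝ)
    (hdense : Dense (↑(Submodule.span ℝ (Set.range K)) :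
      Set (ZeroAtInftyContinuousMap X ℝ)))
    (m : ℕ) (xs : Fin m → X) (hxs : Function.Injective xs)
    (Kmat : Matrix (Fin m) (Fin m) ℝ)
    (hKmat : ∀ j k, Kmat j k = (K (xs j)) (xs k))
    (hinv : IsUnit Kmat.det)
    (hH2 : ∀ x : X, ∑ j, |(Kmat⁻¹ *ᵥ fun j => (K (xs j)) x) j| ≤ 1)
    (y : Fin m → ℝ) (lam : ℝ) (hlam : 0 < lam)
    (cstar : Fin m → ℝ)
    (hmin : ∀ c : Fin m → ℝ,
      (1 / (m : ℝ)) * ∑ j, |(∑ k, cstar k * (K (xs j)) (xs k)) - y j| ^ 2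
          + lam * ∑ k, |cstar k|
        ≤ (1 / (m : ℝ)) * ∑ j, |(∑ k, c k * (K (xs j)) (xs k)) - y j| ^ 2
          + lam * ∑ k, |c k|) :
    ∀ μ : SignedMeasure X, μ.totalVariation.Regular →
      (1 / (m : ℝ)) * ∑ j, |sintegral (∑ k, cstar k • diracSM (xs k)) (K (xs j)) - y j| ^ 2
          + lam * tvNorm (∑ k, cstar k • diracSM (xs k))
        ≤ (1 / (m : ℝ)) * ∑ j, |sintegral μ (K (xs j)) - y j| ^ 2 + lam * tvNorm μ :=
  stmt5_general K m xs Kmat hKmat hinv hH2 y lam hlam cstar hmin
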